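/- arXiv:1504.06516 — 2 statements merged into one kernel-verified Lean document; each statement's English description precedes it below -/
import Mathlib

section
/- Let C₁, C₂, C₃ be real 2×2 matrices each of rank one, with a = det(C₁+C₂) > 0, b = det(C₁+C₃) > 0, c = det(C₂+C₃) > 0 and c < a + b. Set X₀ = C₁+C₂+C₃, X₁ = −C₁+C₂+C₃, X₂ = C₁−C₂+C₃, λ = (a+b−c)/(a+b) ∈ (0,1], and P = λ·(−X₀) + (1−λ)·(−X₁). Then det(P − X₁) = 0, det(P − X₀) = 4(a+b), and det(P − X₂) = 4λb. -/
open Matrix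

lemma det_zero_of_rank_one (C : Matrix (Fin 2) (Fin 2) ℝ) (h : C.rank = 1) :
    C.det = 0 := by
  by_contra hd
  have : C.rank = 2 := by
    have := Matrix.rank_of_isUnit C
      ((Matrix.isUnit_iff_isUnit_det C).mpr (isUnit_iff_ne_zero.mpr hd))
    simpa using this
  omega

lemma det_triple (C₁ C₂ C₃ : Matrix (Fin 2) (Fin 2) ℝ)
    (h1 : C₁.det = 0) (h2 : C₂.det = 0) (h3 : C₃.det = 0) (x y z : ℝ) :
    (x • C₁ + y • C₂ + z • C₃).det =
      x * y * (C₁ + C₂).det + x * z * (C₁ + C₃).det + y * z * (C₂ + C₃).det := by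
  simp only [Matrix.det_fin_two, Matrix.add_apply, Matrix.smul_apply, smul_eq_mul] at *
  linear_combination (x^2 - x*y - x*z) * h1 + (y^2 - x*y - y*z) * h2
    + (z^2 - x*z - y*z) * h3

/-- The auxiliary point `P = λ(−X₀) + (1−λ)(−X₁)` with
`λ = (a+b−c)/(a+b)` satisfies `det(P−X₁) = 0`, `det(P−X₀) = 4(a+b)` and
`det(P−X₂) = 4λb`. -/
theorem auxiliary_point_P
    (C₁ C₂ C₃ : Matrix (Fin 2) (Fin 2) ℝ)
    (hC₁ : C₁.rank = 1) (hC₂ : C₂.rank = 1) (hC₃ : C₃.rank = 1)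
    (ha : 0 < (C₁ + C₂).det) (hb : 0 < (C₁ + C₃).det) (hc : 0 < (C₂ + C₃).det)
    (htri : (C₂ + C₃).det < (C₁ + C₂).det + (C₁ + C₃).det)
    (X₀ X₁ X₂ P : Matrix (Fin 2) (Fin 2) ℝ) (lam : ℝ)
    (hX₀ : X₀ = C₁ + C₂ + C₃) (hX₁ : X₁ = -C₁ + C₂ + C₃) (hX₂ : X₂ = C₁ - C₂ + C₃)
    (hlam : lam = ((C₁ + C₂).det + (C₁ + C₃).det - (C₂ + C₃).det)
      / ((C₁ + C₂).det + (C₁ + C₃).det))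
    (hP : P = lam • (-X₀) + (1 - lam) • (-X₁)) :
    (P - X₁).det = 0 ∧
    (P - X₀).det = 4 * ((C₁ + C₂).det + (C₁ + C₃).det) ∧
    (P - X₂).det = 4 * lam * (C₁ + C₃).det := by
  set a := (C₁ + C₂).det
  set b := (C₁ + C₃).det
  set c := (C₂ + C₃).det
  have hab : a + b ≠ 0 := by positivity
  have hlam' : lam * (a + b) = a + b - c := by
    rw [hlam]; field_simp
  have h1 := det_zero_of_rank_one C₁ hC₁
  have h2 := det_zero_of_rank_one C₂ hC₂
  have h3 := det_zero_of_rank_one C₃ hC₃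
  have e1 : P - X₁ = (2 - 2 * lam) • C₁ + (-2 : ℝ) • C₂ + (-2 : ℝ) • C₃ := by
    subst hP hX₀ hX₁; ext i j
    simp [Matrix.add_apply, Matrix.sub_apply, Matrix.smul_apply, Matrix.neg_apply]
    ring
  have e2 : P - X₀ = (-2 * lam) • C₁ + (-2 : ℝ) • C₂ + (-2 : ℝ) • C₃ := by
    subst hP hX₀ hX₁; ext i j
    simp [Matrix.add_apply, Matrix.sub_apply, Matrix.smul_apply, Matrix.neg_apply]
    ring
  have e3 : P - X₂ = (-2 * lam) • C₁ + (0 : ℝ) • C₂ + (-2 : ℝ) • C₃ := by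
    subst hP hX₀ hX₁ hX₂; ext i j
    simp [Matrix.add_apply, Matrix.sub_apply, Matrix.smul_apply, Matrix.neg_apply]
    ring
  rw [e1, e2, e3, det_triple C₁ C₂ C₃ h1 h2 h3, det_triple C₁ C₂ C₃ h1 h2 h3,
    det_triple C₁ C₂ C₃ h1 h2 h3]
  refine ⟨by nlinarith [hlam'], by nlinarith [hlam'], by ring⟩
end

section
/- Let C₁, C₂, C₃ be real 2×2 matrices each of rank one, with a = det(C₁+C₂) > 0, b = det(C₁+C₃) > 0, c = det(C₂+C₃) > 0 and b > a + c. Set X₁ = −C₁+C₂+C₃, X₂ = C₁−C₂+C₃ and λ = (b−a−c)/(b−c) ∈ (0,1). Then every rank-one convex function f : M₂(ℝ) → ℝ satisfies f(0) ≤ (λ/4)·(f(X₁) + f(−X₁)) + ((2−λ)/4)·(f(X₂) + f(−X₂)). -/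
open Matrix

lemma det_zero_of_rank_one_s17 (M : Matrix (Fin 2) (Fin 2) ℝ) (h : M.rank = 1) : M.det = 0 := by
  by_contra hd
  have hu : IsUnit M := M.isUnit_iff_isUnit_det.mpr (Ne.isUnit hd)
  have := Matrix.rank_of_isUnit M hu
  simp [this] at h

lemma rank_le_one_of_det_zero (M : Matrix (Fin 2) (Fin 2) ℝ) (h : M.det = 0) : M.rank ≤ 1 := by
  obtain ⟨v, hv, hMv⟩ := (Matrix.exists_mulVec_eq_zero_iff).mpr h
  have hk : LinearMap.ker M.mulVecLin ≠ ⊥ := by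
    intro hbot
    apply hv
    have : v ∈ LinearMap.ker M.mulVecLin := by
      simp [LinearMap.mem_ker, Matrix.mulVecLin_apply, hMv]
    rw [hbot] at this
    simpa using this
  have h1 : 1 ≤ Module.finrank ℝ (LinearMap.ker M.mulVecLin) := by
    rw [Nat.one_le_iff_ne_zero]
    intro h0
    exact hk (Submodule.finrank_eq_zero.mp h0)
  have h2 := LinearMap.finrank_range_add_finrank_ker M.mulVecLin
  have h3 : Module.finrank ℝ (Fin 2 → ℝ) = 2 := by simp
  rw [h3] at h2
  have : M.rank = Module.finrank ℝ (LinearMap.range M.mulVecLin) := rfl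
  omega

lemma det_lin_comb (x y z : ℝ) (C₁ C₂ C₃ : Matrix (Fin 2) (Fin 2) ℝ)
    (h1 : C₁.det = 0) (h2 : C₂.det = 0) (h3 : C₃.det = 0) :
    (x • C₁ + y • C₂ + z • C₃).det
      = x * y * (C₁ + C₂).det + x * z * (C₁ + C₃).det + y * z * (C₂ + C₃).det := by
  simp only [Matrix.det_fin_two, Matrix.add_apply, Matrix.smul_apply, smul_eq_mul] at *
  linear_combination (x^2 - x*y - x*z) * h1 + (y^2 - x*y - y*z) * h2 + (z^2 - x*z - y*z) * h3

/-- In the case `b > a + c`, the degenerate symmetric laminate supported on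
`{±X₁, ±X₂}` with weights `λ/4` on `±X₁` and `(2−λ)/4` on `±X₂`, where
`λ = (b−a−c)/(b−c)`. -/
theorem laminate_case_two_plane
    (C₁ C₂ C₃ : Matrix (Fin 2) (Fin 2) ℝ)
    (hC₁ : C₁.rank = 1) (hC₂ : C₂.rank = 1) (hC₃ : C₃.rank = 1)
    (ha : 0 < (C₁ + C₂).det) (hb : 0 < (C₁ + C₃).det) (hc : 0 < (C₂ + C₃).det)
    (hbig : (C₁ + C₂).det + (C₂ + C₃).det < (C₁ + C₃).det)
    (f : Matrix (Fin 2) (Fin 2) ℝ → ℝ)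
    (hf : ∀ A B : Matrix (Fin 2) (Fin 2) ℝ, B.rank ≤ 1 →
      ConvexOn ℝ Set.univ (fun t : ℝ => f (A + t • B))) :
    f 0 ≤ (((C₁ + C₃).det - (C₁ + C₂).det - (C₂ + C₃).det)
             / ((C₁ + C₃).det - (C₂ + C₃).det) / 4)
            * (f (-C₁ + C₂ + C₃) + f (-(-C₁ + C₂ + C₃)))
        + ((2 - ((C₁ + C₃).det - (C₁ + C₂).det - (C₂ + C₃).det)
             / ((C₁ + C₃).det - (C₂ + C₃).det)) / 4)
            * (f (C₁ - C₂ + C₃) + f (-(C₁ - C₂ + C₃))) := by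
  have d1 := det_zero_of_rank_one_s17 C₁ hC₁
  have d2 := det_zero_of_rank_one_s17 C₂ hC₂
  have d3 := det_zero_of_rank_one_s17 C₃ hC₃
  set a := (C₁ + C₂).det with ha'
  set b := (C₁ + C₃).det with hb'
  set c := (C₂ + C₃).det with hc'
  have hbc : 0 < b - c := by linarith
  set L : ℝ := (b - a - c) / (b - c) with hL
  have hL0 : 0 < L := div_pos (by linarith) hbc
  have hL1 : L < 1 := by rw [hL, div_lt_one hbc]; linarith
  set Y : Matrix (Fin 2) (Fin 2) ℝ := -C₁ + C₂ + (L - 1) • C₃ with hYdef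
  have hYdet : Y.det = 0 := by
    have e : Y = (-1 : ℝ) • C₁ + (1 : ℝ) • C₂ + (L - 1) • C₃ := by module
    rw [e, det_lin_comb _ _ _ _ _ _ d1 d2 d3, hL]
    field_simp
    ring
  have hYrank := rank_le_one_of_det_zero Y hYdet
  have hnC₃det : (-C₃).det = 0 := by
    rw [show (-C₃) = (-1 : ℝ) • C₃ by module, Matrix.det_smul, d3]; ring
  have hnC₃ := rank_le_one_of_det_zero (-C₃) hnC₃det
  -- step 1 : split 0 into Y and -Y
  have s1 := (hf 0 Y hYrank).2 (Set.mem_univ (1:ℝ)) (Set.mem_univ (-1:ℝ))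
      (by norm_num : (0:ℝ) ≤ 1/2) (by norm_num : (0:ℝ) ≤ 1/2) (by norm_num)
  simp only [smul_eq_mul] at s1
  norm_num at s1
  -- step 2 : split Y into X₁ and -X₂
  have s2 := (hf (-(C₁ - C₂ + C₃)) C₃ hC₃.le).2 (Set.mem_univ (2:ℝ)) (Set.mem_univ (0:ℝ))
      (by positivity : (0:ℝ) ≤ L/2) (by linarith : (0:ℝ) ≤ 1 - L/2) (by ring)
  simp only [smul_eq_mul] at s2
  rw [show L/2 * 2 + (1 - L/2) * 0 = L by ring] at s2
  rw [show -(C₁ - C₂ + C₃) + L • C₃ = Y by rw [hYdef]; module,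
      show -(C₁ - C₂ + C₃) + (2:ℝ) • C₃ = -C₁ + C₂ + C₃ by module,
      show -(C₁ - C₂ + C₃) + (0:ℝ) • C₃ = -(C₁ - C₂ + C₃) by module] at s2
  -- step 3 : split -Y into -X₁ and X₂
  have s3 := (hf (C₁ - C₂ + C₃) (-C₃) hnC₃).2 (Set.mem_univ (2:ℝ)) (Set.mem_univ (0:ℝ))
      (by positivity : (0:ℝ) ≤ L/2) (by linarith : (0:ℝ) ≤ 1 - L/2) (by ring)
  simp only [smul_eq_mul] at s3
  rw [show L/2 * 2 + (1 - L/2) * 0 = L by ring] at s3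
  rw [show (C₁ - C₂ + C₃) + L • (-C₃) = -Y by rw [hYdef]; module,
      show (C₁ - C₂ + C₃) + (2:ℝ) • (-C₃) = -(-C₁ + C₂ + C₃) by module,
      show (C₁ - C₂ + C₃) + (0:ℝ) • (-C₃) = C₁ - C₂ + C₃ by module] at s3
  linarith
end
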